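/- Let (X,≤) be a metrizable suborderable Hausdorff space with compatible linear order ≤ and compatible convex metric ρ, having infinitely many connected components. Let ε > 0, Z ∈ D[X,2ε], and let C be a connected component of Z with diam(C) ≥ 2ε. Then Z has a partition U ⊆ D[X,ε] which is a discrete family in X, with |U| ≠ 2, such that: (i) for every U ∈ U with U ∩ C = ∅, either u < c for all u ∈ U, c ∈ C, or c < u for all u ∈ U, c ∈ C; (ii) |{U ∈ U : U < C}| ≥ 6·ℓ(C) and |{U ∈ U : C < U}| ≥ 6·r(C); and moreover diam(U) ≤ 2ε for every U ∈ U with U ∩ C = ∅. -/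

import Mathlib

open Topology

section MetricSuborderable

variable {X : Type*} [MetricSpace X] [LinearOrder X]

/-- `(←, C)`: the points lying strictly below every point of `C`. -/
def leftOf (C : Set X) : Set X := {x | ∀ c ∈ C, x < c}

/-- `(C, →)`: the points lying strictly above every point of `C`. -/
def rightOf (C : Set X) : Set X := {x | ∀ c ∈ C, c < x}

/-- `ℓ(C) = |cl((←, C)) ∩ C|`. -/
noncomputable def ell (C : Set X) : ℕ := (closure (leftOf C) ∩ C).ncard

/-- `r(C) = |C ∩ cl((C, →))|`. -/
noncomputable def rr (C : Set X) : ℕ := (C ∩ closure (rightOf C)).ncard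

/-- The open `δ`-neighbourhood `O(C, δ)` of a set `C`. -/
def ballAround (C : Set X) (δ : ℝ) : Set X := {x | ∃ c ∈ C, dist x c < δ}

/-- The neighbourhood `Δ(C, ε)` of a component `C`; note that
`(←, C] = (C, →)ᶜ` and `[C, →) = (←, C)ᶜ`. -/
noncomputable def Delta (C : Set X) (ε : ℝ) : Set X :=
  if ell C = 0 ∧ rr C = 0 then C
  else if ell C ≠ 0 ∧ rr C = 0 then ballAround C (ε / 2) ∩ (rightOf C)ᶜ
  else if ell C = 0 ∧ rr C ≠ 0 then ballAround C (ε / 2) ∩ (leftOf C)ᶜ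
  else ballAround C (ε / 2)

/-- `D[X]`: the clopen sets that are a connected component or meet infinitely
many connected components. -/
def DD (X : Type*) [TopologicalSpace X] : Set (Set X) :=
  {U | IsClopen U ∧ ((∃ x : X, U = connectedComponent x) ∨
    {C : Set X | ∃ x ∈ U, C = connectedComponent x}.Infinite)}

/-- `C_ε[U]`: the connected components of `U` of diameter at least `ε`. -/
noncomputable def compsGE (U : Set X) (ε : ℝ) : Set (Set X) :=
  {C | (∃ x ∈ U, C = connectedComponentIn U x) ∧
    ENNReal.ofReal ε ≤ EMetric.diam C}

/-- `D[X, ε]`: the members of `D[X]` of diameter `< ε`, or contained in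
`Δ(C, ε)` for some component `C ∈ C_ε[U]`. -/
noncomputable def DXeps (X : Type*) [MetricSpace X] [LinearOrder X] (ε : ℝ) :
    Set (Set X) :=
  {U | U ∈ DD X ∧ (EMetric.diam U < ENNReal.ofReal ε ∨
    ∃ C ∈ compsGE U ε, U ⊆ Delta C ε)}

/-- `κ[C]`: the least `n` with `diam C ≥ 2^(-n)`. -/
noncomputable def kappa (C : Set X) : ℕ :=
  sInf {n : ℕ | ENNReal.ofReal ((2 : ℝ) ^ (-(n : ℤ))) ≤ EMetric.diam C}

/-- `A < B` pointwise for subsets of a linear order. -/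
def setBelow (A B : Set X) : Prop := ∀ a ∈ A, ∀ b ∈ B, a < b

end MetricSuborderable

/-!
Convexity of the metric forces a component `C` of `Z ∈ D[X, 2ε]` with `diam C ≥ 2ε` to be the
component whose `Δ` contains `Z`, so every point of `Z` lies within `ε` of `C`, and `Z` reaches to
the left of `C` only if `ℓ(C) ≠ 0`, i.e. only if the least point `a` of `C` is a limit of points
below it. A base of convex open sets lets any two points in different components be separated by a
clopen lower set. Such cuts between `a` and six successively chosen points of `Z` approaching `a`
carve at least six clopen slabs out of `Z ∩ (←, C)`, beyond which `Z` stays within `ε / 2` of `C`.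

Each slab `P` lies below `a` within distance `ε` of it, and is partitioned into members of
`D[X, ε]`: if `P` has a least component `K`, then `K` (enlarged, when it is not open, by a cut just
to the right of its right end, which keeps it of diameter `< ε` or inside `Δ(K, ε)`) is split off
and the rest of `P` has diameter `< ε`; otherwise cuts below points whose distance to `a` tends to
`ε` cover `P` by countably many clopen sets of diameter `< ε`. The right of `C` is the order dual,
and the middle piece that remains contains `C` and lies in `Δ(C, ε)`.
-/

open Set

section OrderTopology

variable {X : Type*} [TopologicalSpace X] [LinearOrder X]

theorem orderClosedTopology_of_isOpen_Iio_Ioi (hIio : ∀ a : X, IsOpen (Iio a))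
    (hIoi : ∀ a : X, IsOpen (Ioi a)) : OrderClosedTopology X where
  isClosed_le' := isOpen_compl_iff.1 <| isOpen_prod_iff.mpr fun a₁ a₂ (h : ¬a₁ ≤ a₂) =>
    let ⟨x, hx, y, hy, h⟩ := (lt_of_not_ge h).exists_disjoint_Iio_Ioi
    ⟨Ioi y, Iio x, hIoi y, hIio x, hy, hx, fun ⟨b₁, b₂⟩ ⟨h₁, h₂⟩ => not_le_of_gt (h b₂ h₂ b₁ h₁)⟩

theorem exists_lt_notMem_connectedComponent {S U : Set X} {p : X} (hp : p ∈ closure S)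
    (hS : Disjoint S (connectedComponent p)) (hU : U ∈ 𝓝 p) :
    ∃ s₁ ∈ S ∩ U, ∃ s₂ ∈ S ∩ U, s₁ < s₂ ∧ s₂ ∉ connectedComponent s₁ := by
  obtain ⟨s, hsU, hsS⟩ := mem_closure_iff_nhds.1 hp U hU
  have hps : p ∉ connectedComponent s := fun h =>
    hS.notMem_of_mem_left hsS (connectedComponent_eq h ▸ mem_connectedComponent)
  obtain ⟨s', ⟨hs'U, hs's⟩, hs'S⟩ := mem_closure_iff_nhds.1 hp _
    (Filter.inter_mem hU (isClosed_connectedComponent.isOpen_compl.mem_nhds hps))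
  rcases lt_or_gt_of_ne (ne_of_mem_of_not_mem mem_connectedComponent hs's) with h | h
  · exact ⟨s, ⟨hsS, hsU⟩, s', ⟨hs'S, hs'U⟩, h, hs's⟩
  · refine ⟨s', ⟨hs'S, hs'U⟩, s, ⟨hsS, hsU⟩, h, fun hs => hs's ?_⟩
    exact connectedComponent_eq hs ▸ mem_connectedComponent

variable [OrderClosedTopology X]

theorem IsPreconnected.mem_leftOf_or_mem_rightOf {K : Set X} (hK : IsPreconnected K) {t : X}
    (ht : t ∉ K) : t ∈ leftOf K ∨ t ∈ rightOf K := by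
  by_contra h
  simp only [leftOf, rightOf, mem_ofPred_eq, not_or, not_forall, not_lt] at h
  obtain ⟨⟨k₁, hk₁, hk₁t⟩, k₂, hk₂, htk₂⟩ := h
  exact ht (hK.Icc_subset hk₁ hk₂ ⟨hk₁t, htk₂⟩)

theorem IsPreconnected.setBelow_or_setBelow {A B : Set X} (hA : IsPreconnected A)
    (hB : IsPreconnected B) (hAB : Disjoint A B) : setBelow A B ∨ setBelow B A := by
  by_contra h
  simp only [setBelow, not_or, not_forall, not_lt] at h
  obtain ⟨⟨a₁, ha₁, b₁, hb₁, hba₁⟩, b₂, hb₂, a₂, ha₂, hab₂⟩ := h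
  rcases hB.mem_leftOf_or_mem_rightOf (hAB.notMem_of_mem_left ha₂) with h | h
  · exact hAB.notMem_of_mem_right hb₁ (hA.Icc_subset ha₂ ha₁ ⟨(h b₁ hb₁).le, hba₁⟩)
  · exact (h b₂ hb₂).not_ge hab₂

end OrderTopology

section Cut

variable {X : Type*} [TopologicalSpace X] [LinearOrder X]

def HasOrdConnectedBasis (X : Type*) [TopologicalSpace X] [LinearOrder X] : Prop :=
  ∀ (x : X) (U : Set X), IsOpen U → x ∈ U → ∃ V : Set X, IsOpen V ∧ x ∈ V ∧ V ⊆ U ∧ V.OrdConnected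

theorem HasOrdConnectedBasis.dual (h : HasOrdConnectedBasis X) : HasOrdConnectedBasis Xᵒᵈ :=
  fun x U hU hx =>
    let ⟨V, hV, hxV, hVU, hVc⟩ := h (OrderDual.ofDual x) U hU hx
    ⟨V, hV, hxV, hVU, hVc.dual⟩

variable [OrderClosedTopology X]

theorem isClopen_setOf_lt_and_Icc_subset (hbase : HasOrdConnectedBasis X) {x y : X}
    {U₁ U₂ : Set X} (hU₁ : IsOpen U₁) (hU₂ : IsOpen U₂) (hcover : Icc x y ⊆ U₁ ∪ U₂)
    (hdisj : ¬(Icc x y ∩ (U₁ ∩ U₂)).Nonempty) (hx : x ∈ U₁)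
    (hy : (Icc x y ∩ U₂).Nonempty) : IsClopen {t | t < y ∧ Icc x t ⊆ U₁} := by
  refine ⟨isOpen_compl_iff.1 <| isOpen_iff_mem_nhds.2 fun t ht => ?_,
    isOpen_iff_mem_nhds.2 fun t ⟨hty, ht⟩ => ?_⟩
  · obtain ⟨u, ⟨hxu, hut⟩, huU₁⟩ : ∃ u ∈ Icc x (min t y), u ∉ U₁ := by
      by_contra! h
      rcases lt_or_ge t y with hty | hyt
      · rw [min_eq_left hty.le] at h
        exact ht ⟨hty, h⟩
      · rw [min_eq_right hyt] at h
        obtain ⟨u, hu, hu₂⟩ := hy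
        exact hdisj ⟨u, hu, h u hu, hu₂⟩
    have huU₂ : u ∈ U₂ := (hcover ⟨hxu, hut.trans (min_le_right t y)⟩).resolve_left huU₁
    have hxu : x < u := hxu.lt_of_ne fun h => huU₁ (h ▸ hx)
    refine Filter.mem_of_superset
      ((isOpen_Ioi.union (hU₂.inter isOpen_Ioi)).mem_nhds (s := Ioi u ∪ U₂ ∩ Ioi x) ?_) ?_
    · rcases (hut.trans (min_le_left t y)).lt_or_eq with h | rfl
      exacts [Or.inl h, Or.inr ⟨huU₂, hxu⟩]
    · rintro s (hus | ⟨hsU₂, hxs⟩) ⟨hsy, hs⟩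
      · exact huU₁ (hs ⟨hxu.le, hus.le⟩)
      · exact hdisj ⟨s, ⟨hxs.le, hsy.le⟩, hs ⟨hxs.le, le_rfl⟩, hsU₂⟩
  · rcases lt_or_ge t x with htx | hxt
    · refine Filter.mem_of_superset
        (Filter.inter_mem (isOpen_Iio.mem_nhds htx) (isOpen_Iio.mem_nhds hty))
        fun s ⟨hsx, hsy⟩ => ⟨hsy, fun u hu => absurd (hu.1.trans hu.2) hsx.not_ge⟩
    · obtain ⟨N, hN, htN, hNU, hNc⟩ := hbase t U₁ hU₁ (ht ⟨hxt, le_rfl⟩)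
      refine Filter.mem_of_superset (Filter.inter_mem (hN.mem_nhds htN) (isOpen_Iio.mem_nhds hty))
        fun s ⟨hsN, hsy⟩ => ⟨hsy, Icc_subset_Icc_union_Icc.trans (union_subset ht ?_)⟩
      exact (hNc.out htN hsN).trans hNU

theorem exists_isClopen_isLowerSet_of_notMem_connectedComponent (hbase : HasOrdConnectedBasis X)
    {x y : X} (hxy : x < y) (hy : y ∉ connectedComponent x) :
    ∃ V : Set X, IsClopen V ∧ IsLowerSet V ∧ x ∈ V ∧ V ⊆ Iio y := by
  have hnc : ¬IsPreconnected (Icc x y) := fun h =>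
    hy (h.subset_connectedComponent (left_mem_Icc.2 hxy.le) (right_mem_Icc.2 hxy.le))
  simp only [IsPreconnected, not_forall] at hnc
  obtain ⟨U₁, U₂, hU₁, hU₂, hcover, hne₁, hne₂, hdisj⟩ := hnc
  wlog hx : x ∈ U₁ generalizing U₁ U₂
  · refine this U₂ U₁ hU₂ hU₁ (union_comm U₁ U₂ ▸ hcover) hne₂ hne₁ (inter_comm U₁ U₂ ▸ hdisj) ?_
    exact (hcover (left_mem_Icc.2 hxy.le)).resolve_left hx
  refine ⟨{t | t < y ∧ Icc x t ⊆ U₁},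
    isClopen_setOf_lt_and_Icc_subset hbase hU₁ hU₂ hcover hdisj hx hne₂,
    fun s t hts hs => ⟨hts.trans_lt hs.1, (Icc_subset_Icc_right hts).trans hs.2⟩,
    ⟨hxy, by simpa using hx⟩, fun t ht => ht.1⟩

end Cut

section ConvexMetric

variable {X : Type*} [MetricSpace X] [LinearOrder X]

def IsConvexMetric (X : Type*) [MetricSpace X] [LinearOrder X] : Prop :=
  ∀ x a b y : X, x ≤ a → a ≤ b → b ≤ y → dist a b ≤ dist x y

theorem IsConvexMetric.dual (h : IsConvexMetric X) : IsConvexMetric Xᵒᵈ :=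
  fun x a b y hxa hab hby => by
    rw [dist_comm a b, dist_comm x y]
    exact h y b a x hby hab hxa

theorem ediam_le_of_forall_le_dist_le {s : Set X} {r : ℝ}
    (h : ∀ x ∈ s, ∀ y ∈ s, x ≤ y → dist x y ≤ r) : Metric.ediam s ≤ ENNReal.ofReal r :=
  Metric.ediam_le_of_forall_dist_le fun x hx y hy =>
    (le_total x y).elim (h x hx y hy) fun hyx => dist_comm x y ▸ h y hy x hx hyx

theorem IsConvexMetric.ediam_Icc_le (h : IsConvexMetric X) (x y : X) :
    Metric.ediam (Icc x y) ≤ edist x y := by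
  rw [edist_dist]
  exact ediam_le_of_forall_le_dist_le fun a ha b hb hab => h x a b y ha.1 hab hb.2

theorem IsConvexMetric.ediam_lt_of_subset_Icc (h : IsConvexMetric X) {s : Set X} {z a : X}
    {ε : ℝ} (hs : s ⊆ Icc z a) (hza : dist z a < ε) : Metric.ediam s < ENNReal.ofReal ε :=
  ((Metric.ediam_mono hs).trans (h.ediam_Icc_le z a)).trans_lt (edist_lt_ofReal.2 hza)

theorem IsConvexMetric.ediam_le_of_forall_exists_dist_le (h : IsConvexMetric X) {A B : Set X}
    {r : ℝ} (hAB : setBelow A B ∨ setBelow B A) (hA : ∀ t ∈ A, ∃ c ∈ B, dist t c ≤ r) :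
    Metric.ediam A ≤ ENNReal.ofReal r := by
  refine ediam_le_of_forall_le_dist_le fun t ht s hs hts => ?_
  rcases hAB with hAB | hBA
  · obtain ⟨c, hc, htc⟩ := hA t ht
    exact (h t t s c le_rfl hts (hAB s hs c hc).le).trans htc
  · obtain ⟨c, hc, hsc⟩ := hA s hs
    exact (h c t s s (hBA c hc t ht).le hts le_rfl).trans (dist_comm c s ▸ hsc)

end ConvexMetric

section Sides

variable {X : Type*} [MetricSpace X] [LinearOrder X] {C : Set X} {ε : ℝ}

theorem ell_dual (C : Set X) : ell (X := Xᵒᵈ) C = rr C := by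
  unfold ell rr
  rw [inter_comm]
  rfl

theorem rr_dual (C : Set X) : rr (X := Xᵒᵈ) C = ell C := by
  unfold ell rr
  rw [inter_comm]
  rfl

theorem Delta_dual (C : Set X) (ε : ℝ) : Delta (X := Xᵒᵈ) C ε = Delta C ε := by
  by_cases h₁ : ell C = 0 <;> by_cases h₂ : rr C = 0 <;>
    simp [Delta, ell_dual, rr_dual, h₁, h₂] <;> rfl

theorem subset_Delta_self (hε : 0 < ε) : C ⊆ Delta C ε := by
  intro c hc
  have hball : c ∈ ballAround C (ε / 2) := ⟨c, hc, by simpa using half_pos hε⟩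
  have hleft : c ∉ leftOf C := fun h => lt_irrefl c (h c hc)
  have hright : c ∉ rightOf C := fun h => lt_irrefl c (h c hc)
  unfold Delta
  split_ifs
  exacts [hc, ⟨hball, hright⟩, ⟨hball, hleft⟩, hball]

theorem Delta_subset_ballAround (hε : 0 < ε) : Delta C ε ⊆ ballAround C (ε / 2) := by
  unfold Delta
  split_ifs
  exacts [fun c hc => ⟨c, hc, by simpa using half_pos hε⟩, inter_subset_left, inter_subset_left,
    subset_rfl]

theorem Delta_eq_self (h : ell C = 0 ∧ rr C = 0) : Delta C ε = C := if_pos h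

theorem disjoint_Delta_leftOf (h : ell C = 0) : Disjoint (Delta C ε) (leftOf C) := by
  unfold Delta
  split_ifs with h₁ h₂ h₃
  · exact disjoint_left.2 fun c hc hl => lt_irrefl c (hl c hc)
  · exact absurd h h₂.1
  · exact disjoint_compl_left.mono_left inter_subset_right
  · exact absurd h (by tauto)

/- Instance search does not identify the metric topology of `Xᵒᵈ` with
`OrderDual.instTopologicalSpace`, so the order-dual instance has to be restated. -/
instance [OrderClosedTopology X] : OrderClosedTopology Xᵒᵈ where
  isClosed_le' := (OrderClosedTopology.isClosed_le' (α := X)).preimage continuous_swap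

variable [OrderClosedTopology X]

theorem le_of_mem_closure_leftOf {q c : X} (hq : q ∈ closure (leftOf C)) (hc : c ∈ C) :
    q ≤ c := by
  by_contra! hcq
  obtain ⟨w, hw, hwC⟩ := mem_closure_iff.1 hq (Ioi c) isOpen_Ioi hcq
  exact (hwC c hc).not_gt hw

theorem subsingleton_closure_leftOf_inter (C : Set X) :
    (closure (leftOf C) ∩ C).Subsingleton := fun _ hq _ hq' =>
  (le_of_mem_closure_leftOf hq.1 hq'.2).antisymm (le_of_mem_closure_leftOf hq'.1 hq.2)

theorem ell_le_one (C : Set X) : ell C ≤ 1 :=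
  have := (subsingleton_closure_leftOf_inter C).finite.to_subtype
  ncard_le_one_iff_subsingleton.2 (subsingleton_closure_leftOf_inter C)

theorem ell_ne_zero_iff : ell C ≠ 0 ↔ (closure (leftOf C) ∩ C).Nonempty := by
  rw [ell, Ne, ncard_eq_zero (subsingleton_closure_leftOf_inter C).finite,
    nonempty_iff_ne_empty]

theorem ell_eq_zero_of_isOpen {U : Set X} (hU : IsOpen U) (hCU : C ⊆ U)
    (hUC : Disjoint U (leftOf C)) : ell C = 0 := by
  by_contra h
  obtain ⟨a, hacl, haC⟩ := ell_ne_zero_iff.1 h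
  exact (hUC.symm.closure_left hU).notMem_of_mem_left hacl (hCU haC)

theorem leftOf_eq_Iio {a : X} (ha : a ∈ closure (leftOf C) ∩ C) : leftOf C = Iio a :=
  Subset.antisymm (fun _ ht => ht a ha.2) fun _ ht _ hc =>
    ht.trans_le (le_of_mem_closure_leftOf ha.1 hc)

theorem rr_ne_zero_iff : rr C ≠ 0 ↔ (C ∩ closure (rightOf C)).Nonempty := by
  rw [← ell_dual C]
  exact ell_ne_zero_iff.trans ⟨fun ⟨x, h₁, h₂⟩ => ⟨x, h₂, h₁⟩, fun ⟨x, h₁, h₂⟩ => ⟨x, h₂, h₁⟩⟩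

theorem rr_eq_zero_of_isOpen {U : Set X} (hU : IsOpen U) (hCU : C ⊆ U)
    (hUC : Disjoint U (rightOf C)) : rr C = 0 :=
  ell_dual C ▸ ell_eq_zero_of_isOpen (X := Xᵒᵈ) hU hCU hUC

theorem mem_Delta_of_mem_leftOf {t : X} (hC : ell C ≠ 0) (ht : t ∈ leftOf C)
    (hd : t ∈ ballAround C (ε / 2)) : t ∈ Delta C ε := by
  obtain ⟨a, -, haC⟩ := ell_ne_zero_iff.1 hC
  have hr : t ∉ rightOf C := fun h => (ht a haC).not_gt (h a haC)
  unfold Delta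
  split_ifs with h₁ h₂ h₃
  exacts [absurd h₁.1 hC, ⟨hd, hr⟩, absurd h₃.1 hC, hd]

theorem mem_Delta_of_mem_rightOf {t : X} (hC : rr C ≠ 0) (ht : t ∈ rightOf C)
    (hd : t ∈ ballAround C (ε / 2)) : t ∈ Delta C ε :=
  Delta_dual C ε ▸ mem_Delta_of_mem_leftOf (X := Xᵒᵈ) (by rwa [ell_dual]) ht hd

end Sides

theorem isOpen_connectedComponent_of_finite {T : Type*} [TopologicalSpace T] {P : Set T}
    (hP : IsClopen P) (hfin : {K | ∃ y ∈ P, K = connectedComponent y}.Finite) {x : T}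
    (hx : x ∈ P) : IsOpen (connectedComponent x) := by
  have hK : connectedComponent x =
      P \ ⋃ K ∈ {K | ∃ y ∈ P, K = connectedComponent y} \ {connectedComponent x}, K := by
    ext t
    simp only [mem_sdiff, mem_iUnion, mem_ofPred_eq, mem_singleton_iff, exists_prop, not_exists,
      not_and]
    refine ⟨fun ht => ⟨hP.connectedComponent_subset hx ht, ?_⟩, fun ⟨htP, h⟩ => ?_⟩
    · rintro K ⟨⟨y, -, rfl⟩, hne⟩ hty
      exact hne ((connectedComponent_eq hty).trans (connectedComponent_eq ht).symm)
    · by_contra hxt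
      exact h _ ⟨⟨t, htP, rfl⟩, fun e => hxt (e ▸ mem_connectedComponent)⟩ mem_connectedComponent
  rw [hK]
  exact hP.isOpen.sdiff (hfin.sdiff.isClosed_biUnion fun K ⟨⟨_, _, hK⟩, _⟩ =>
    hK ▸ isClosed_connectedComponent)

section Partition

variable {X : Type*} [MetricSpace X] [LinearOrder X] {ε : ℝ} {P Q : Set X}
  {𝒱 𝒲 : Set (Set X)}

theorem connectedComponent_mem_DXeps (hε : 0 < ε) {x : X} (hx : IsOpen (connectedComponent x)) :
    connectedComponent x ∈ DXeps X ε :=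
  ⟨⟨⟨isClosed_connectedComponent, hx⟩, Or.inl ⟨x, rfl⟩⟩, (lt_or_ge _ _).imp_right fun hd =>
    ⟨_, ⟨⟨x, mem_connectedComponent, (isPreconnected_connectedComponent.connectedComponentIn
      mem_connectedComponent).symm⟩, hd⟩, subset_Delta_self hε⟩⟩

theorem mem_DXeps_dual {u : Set X} (h : u ∈ DXeps Xᵒᵈ ε) : u ∈ DXeps X ε := by
  obtain ⟨hu, hd | ⟨C, hC, hsub⟩⟩ := h
  · exact ⟨hu, Or.inl hd⟩
  · exact ⟨hu, Or.inr ⟨C, hC, Delta_dual (X := X) C ε ▸ hsub⟩⟩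

structure IsDPartition (ε : ℝ) (P : Set X) (𝒱 : Set (Set X)) : Prop where
  subset_DXeps : 𝒱 ⊆ DXeps X ε
  sUnion_eq : ⋃₀ 𝒱 = P
  pairwiseDisjoint : 𝒱.PairwiseDisjoint id

namespace IsDPartition

theorem subset (h : IsDPartition ε P 𝒱) {v : Set X} (hv : v ∈ 𝒱) : v ⊆ P :=
  h.sUnion_eq ▸ subset_sUnion_of_mem hv

theorem exists_mem (h : IsDPartition ε P 𝒱) {x : X} (hx : x ∈ P) : ∃ v ∈ 𝒱, x ∈ v :=
  mem_sUnion.1 (h.sUnion_eq.symm ▸ hx)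

theorem ofDual (h : IsDPartition (X := Xᵒᵈ) ε P 𝒱) : IsDPartition ε P 𝒱 :=
  ⟨fun _ hv => mem_DXeps_dual (h.subset_DXeps hv), h.sUnion_eq, h.pairwiseDisjoint⟩

theorem union (h₁ : IsDPartition ε P 𝒱) (h₂ : IsDPartition ε Q 𝒲) (hPQ : Disjoint P Q) :
    IsDPartition ε (P ∪ Q) (𝒱 ∪ 𝒲) where
  subset_DXeps := union_subset h₁.subset_DXeps h₂.subset_DXeps
  sUnion_eq := by rw [sUnion_union, h₁.sUnion_eq, h₂.sUnion_eq]
  pairwiseDisjoint := h₁.pairwiseDisjoint.union h₂.pairwiseDisjoint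
    fun _ hu _ hv _ => hPQ.mono (h₁.subset hu) (h₂.subset hv)

theorem iUnion {P : ℕ → Set X} {𝒱 : ℕ → Set (Set X)} (h : ∀ n, IsDPartition ε (P n) (𝒱 n))
    (hP : Pairwise (Function.onFun Disjoint P)) : IsDPartition ε (⋃ n, P n) (⋃ n, 𝒱 n) where
  subset_DXeps := iUnion_subset fun n => (h n).subset_DXeps
  sUnion_eq := by simp only [sUnion_iUnion, (h _).sUnion_eq]
  pairwiseDisjoint := by
    simp only [Set.PairwiseDisjoint, Set.Pairwise, mem_iUnion]
    rintro u ⟨m, hu⟩ v ⟨n, hv⟩ huv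
    rcases eq_or_ne m n with rfl | hmn
    · exact (h m).pairwiseDisjoint hu hv huv
    · exact (hP hmn).mono ((h m).subset hu) ((h n).subset hv)

theorem exists_mem_nhds_subsingleton (h : IsDPartition ε P 𝒱) (hP : IsClosed P) (x : X) :
    ∃ N ∈ 𝓝 x, {u | u ∈ 𝒱 ∧ (u ∩ N).Nonempty}.Subsingleton := by
  by_cases hx : x ∈ P
  · obtain ⟨u₀, hu₀, hxu₀⟩ := h.exists_mem hx
    have hsame : ∀ u ∈ 𝒱, (u ∩ u₀).Nonempty → u = u₀ := fun u hu ⟨t, htu, htu₀⟩ => by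
      by_contra huu₀
      exact disjoint_left.1 (h.pairwiseDisjoint hu hu₀ huu₀) htu htu₀
    refine ⟨u₀, ((h.subset_DXeps hu₀).1.1.isOpen).mem_nhds hxu₀, ?_⟩
    rintro u ⟨hu, hne⟩ v ⟨hv, hne'⟩
    rw [hsame u hu hne, hsame v hv hne']
  · refine ⟨Pᶜ, hP.isOpen_compl.mem_nhds hx, ?_⟩
    rintro u ⟨hu, t, htu, htP⟩
    exact absurd (h.subset hu htu) htP

end IsDPartition

theorem isDPartition_empty : IsDPartition (X := X) ε ∅ ∅ :=
  ⟨empty_subset _, sUnion_empty, pairwiseDisjoint_empty⟩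

theorem isDPartition_singleton (h : P ∈ DXeps X ε) : IsDPartition ε P {P} :=
  ⟨singleton_subset_iff.2 h, sUnion_singleton P, pairwiseDisjoint_singleton _ _⟩

theorem exists_isDPartition_of_ediam_lt (hε : 0 < ε) (hP : IsClopen P)
    (hd : Metric.ediam P < ENNReal.ofReal ε) : ∃ 𝒱, IsDPartition ε P 𝒱 := by
  by_cases hinf : {K | ∃ x ∈ P, K = connectedComponent x}.Infinite
  · exact ⟨{P}, isDPartition_singleton ⟨⟨hP, Or.inr hinf⟩, Or.inl hd⟩⟩
  refine ⟨{K | ∃ x ∈ P, K = connectedComponent x}, ?_, ?_, ?_⟩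
  · rintro _ ⟨x, hx, rfl⟩
    exact connectedComponent_mem_DXeps hε
      (isOpen_connectedComponent_of_finite hP (not_infinite.1 hinf) hx)
  · refine Subset.antisymm (sUnion_subset ?_) fun x hx => ⟨_, ⟨x, hx, rfl⟩, mem_connectedComponent⟩
    rintro _ ⟨x, hx, rfl⟩
    exact hP.connectedComponent_subset hx
  · rintro _ ⟨x, -, rfl⟩ _ ⟨y, -, rfl⟩ hxy
    exact connectedComponent_disjoint hxy

theorem exists_isDPartition_iUnion (hε : 0 < ε) {U : ℕ → Set X} (hU : ∀ n, IsClopen (U n))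
    (hd : ∀ n, Metric.ediam (U n) < ENNReal.ofReal ε) : ∃ 𝒱, IsDPartition ε (⋃ n, U n) 𝒱 := by
  have hclopen : ∀ n, IsClopen (disjointed U n) := fun n =>
    (hU n).diff (Finset.sup_set_eq_biUnion _ U ▸ isClopen_biUnion_finset fun i _ => hU i)
  choose 𝒱 h𝒱 using fun n => exists_isDPartition_of_ediam_lt hε (hclopen n)
    ((Metric.ediam_mono (disjointed_subset U n)).trans_lt (hd n))
  exact ⟨_, iUnion_disjointed (f := U) ▸ IsDPartition.iUnion h𝒱 (disjoint_disjointed U)⟩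

end Partition

theorem ENNReal.exists_pos_le_half_and_add_lt (e : ENNReal) {ε : ℝ} (hε : 0 < ε) :
    ∃ δ > 0, δ ≤ ε / 2 ∧ (e < ENNReal.ofReal ε → e + ENNReal.ofReal δ < ENNReal.ofReal ε) := by
  by_cases he : e < ENNReal.ofReal ε
  · obtain ⟨r, hr, her⟩ := ENNReal.lt_iff_exists_add_pos_lt.1 he
    refine ⟨min (ε / 2) r, lt_min (half_pos hε) hr, min_le_left _ _, fun _ => ?_⟩
    refine lt_of_le_of_lt ?_ her
    gcongr
    exact (ENNReal.ofReal_le_ofReal (min_le_right _ _)).trans_eq (ENNReal.ofReal_coe_nnreal)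
  · exact ⟨ε / 2, half_pos hε, le_rfl, fun h => absurd h he⟩

section Bottom

variable {X : Type*} [MetricSpace X] [LinearOrder X] [OrderClosedTopology X] {ε : ℝ}
  {P : Set X} {a : X}

theorem mem_DXeps_of_diff_subset_Icc (hconv : IsConvexMetric X) (hε : 0 < ε) {Y : Set X}
    (hY : IsClopen Y) {p s : X} (hpY : connectedComponent p ⊆ Y)
    (hK : ¬IsOpen (connectedComponent p)) (hpr : p ∈ closure (rightOf (connectedComponent p)))
    (hps : p ≤ s) (hYs : Y \ connectedComponent p ⊆ Icc p s) (hpsε : dist p s < ε / 2)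
    (hKs : Metric.ediam (connectedComponent p) < ENNReal.ofReal ε →
      Metric.ediam (connectedComponent p) + edist p s < ENNReal.ofReal ε) :
    Y ∈ DXeps X ε := by
  set K := connectedComponent p
  have hpK : p ∈ K := mem_connectedComponent
  refine ⟨⟨hY, Or.inr fun hfin => hK (isOpen_connectedComponent_of_finite hY hfin (hpY hpK))⟩, ?_⟩
  refine (lt_or_ge (Metric.ediam K) (ENNReal.ofReal ε)).imp (fun hd => ?_) fun hd =>
    ⟨K, ⟨⟨p, hpY hpK, (hY.connectedComponentIn_eq (hpY hpK)).symm⟩, hd⟩, fun t ht => ?_⟩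
  · have hYK : Y ⊆ K ∪ Icc p s := fun t ht => (em (t ∈ K)).imp_right fun htK => hYs ⟨ht, htK⟩
    calc Metric.ediam Y ≤ Metric.ediam (K ∪ Icc p s) := Metric.ediam_mono hYK
      _ ≤ Metric.ediam K + Metric.ediam (Icc p s) :=
        Metric.ediam_union_le ⟨p, hpK, left_mem_Icc.2 hps⟩
      _ ≤ Metric.ediam K + edist p s := by gcongr; exact hconv.ediam_Icc_le p s
      _ < ENNReal.ofReal ε := hKs hd
  · by_cases htK : t ∈ K
    · exact subset_Delta_self hε htK
    obtain ⟨hpt, hts⟩ := hYs ⟨ht, htK⟩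
    refine mem_Delta_of_mem_rightOf (rr_ne_zero_iff.2 ⟨p, hpK, hpr⟩)
      ((isPreconnected_connectedComponent.mem_leftOf_or_mem_rightOf htK).resolve_left
        fun h => (h p hpK).not_ge hpt) ⟨p, hpK, ?_⟩
    exact (dist_comm t p ▸ hconv p p t s le_rfl hpt hts).trans_lt hpsε

theorem exists_mem_DXeps_of_not_isOpen (hconv : IsConvexMetric X)
    (hbase : HasOrdConnectedBasis X) (hε : 0 < ε) (hP : IsClopen P) {x : X} (hx : x ∈ P)
    (hright : P \ connectedComponent x ⊆ rightOf (connectedComponent x))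
    (hK : ¬IsOpen (connectedComponent x)) :
    ∃ Y ∈ DXeps X ε, IsClopen Y ∧ Y ⊆ P ∧ ∃ z ∈ P, P \ Y ⊆ Ici z := by
  have hKP := hP.connectedComponent_subset hx
  obtain ⟨p, hpK, hp⟩ : ∃ p ∈ connectedComponent x, p ∈ closure (P \ connectedComponent x) := by
    by_contra! h
    have hKeq : connectedComponent x = P ∩ (closure (P \ connectedComponent x))ᶜ :=
      Subset.antisymm (fun k hk => ⟨hKP hk, h k hk⟩) fun t ⟨htP, ht⟩ =>
        by_contra fun htK => ht (subset_closure ⟨htP, htK⟩)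
    exact hK (hKeq ▸ hP.isOpen.inter isClosed_closure.isOpen_compl)
  rw [connectedComponent_eq hpK] at hKP hright hK hp
  obtain ⟨δ, hδ, hδε, hδK⟩ := (Metric.ediam (connectedComponent p)).exists_pos_le_half_and_add_lt hε
  obtain ⟨s₁, ⟨hs₁, -⟩, s₂, ⟨hs₂, hs₂δ⟩, h₁₂, hs₂₁⟩ :=
    exists_lt_notMem_connectedComponent hp disjoint_sdiff_left (Metric.ball_mem_nhds p hδ)
  obtain ⟨V, hV, hVlow, hs₁V, hVs₂⟩ :=
    exists_isClopen_isLowerSet_of_notMem_connectedComponent hbase h₁₂ hs₂₁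
  have hps₂ : dist p s₂ < δ := by rw [dist_comm]; exact hs₂δ
  refine ⟨P ∩ V, mem_DXeps_of_diff_subset_Icc hconv hε (hP.inter hV)
    (subset_inter hKP fun k hk => hVlow (hright hs₁ k hk).le hs₁V) hK (closure_mono hright hp)
    (hright hs₂ p mem_connectedComponent).le
    (fun t ⟨⟨htP, htV⟩, htK⟩ => ⟨(hright ⟨htP, htK⟩ p mem_connectedComponent).le, (hVs₂ htV).le⟩)
    (hps₂.trans_le hδε) fun hd => ?_, hP.inter hV, inter_subset_left, s₁, hs₁.1,
    fun t ⟨htP, ht⟩ => le_of_not_gt fun hts => ht ⟨htP, hVlow hts.le hs₁V⟩⟩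
  exact (add_le_add_right (edist_lt_ofReal.2 hps₂).le _).trans_lt (hδK hd)

theorem exists_mem_DXeps_of_diff_subset_rightOf (hconv : IsConvexMetric X)
    (hbase : HasOrdConnectedBasis X) (hε : 0 < ε) (hP : IsClopen P) {x : X} (hx : x ∈ P)
    (hright : P \ connectedComponent x ⊆ rightOf (connectedComponent x)) :
    ∃ Y ∈ DXeps X ε, IsClopen Y ∧ Y ⊆ P ∧ ∃ z ∈ P, P \ Y ⊆ Ici z := by
  by_cases hK : IsOpen (connectedComponent x)
  · exact ⟨_, connectedComponent_mem_DXeps hε hK, ⟨isClosed_connectedComponent, hK⟩,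
      hP.connectedComponent_subset hx, x, hx, fun t ht => (hright ht x mem_connectedComponent).le⟩
  · exact exists_mem_DXeps_of_not_isOpen hconv hbase hε hP hx hright hK

theorem exists_isDPartition_of_forall_exists_mem_leftOf (hconv : IsConvexMetric X)
    (hbase : HasOrdConnectedBasis X) (hε : 0 < ε) (hP : IsClopen P) (hPa : ∀ t ∈ P, t < a)
    (hdist : ∀ t ∈ P, dist t a < ε)
    (hleft : ∀ x ∈ P, ∃ t ∈ P, t ∈ leftOf (connectedComponent x)) :
    ∃ 𝒱, IsDPartition ε P 𝒱 := by
  have hcover : ∀ r < ε, ∃ U, IsClopen U ∧ U ⊆ P ∧ Metric.ediam U < ENNReal.ofReal ε ∧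
      ∀ t ∈ P, dist t a ≤ r → t ∈ U := by
    intro r hr
    by_cases hy : ∃ y ∈ P, r < dist y a
    · obtain ⟨y, hyP, hry⟩ := hy
      obtain ⟨t, htP, hty⟩ := hleft y hyP
      have hyt : y ∉ connectedComponent t := fun h =>
        lt_irrefl t (hty t (connectedComponent_eq h ▸ mem_connectedComponent))
      obtain ⟨V, hV, hVlow, htV, hVy⟩ :=
        exists_isClopen_isLowerSet_of_notMem_connectedComponent hbase
          (hty y mem_connectedComponent) hyt
      refine ⟨P \ V, hP.diff hV, sdiff_subset, hconv.ediam_lt_of_subset_Icc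
        (fun s hs => ⟨le_of_not_gt fun hst => hs.2 (hVlow hst.le htV), (hPa s hs.1).le⟩)
        (hdist t htP), fun s hs hsr => ⟨hs, fun hsV => ?_⟩⟩
      exact hry.not_ge ((hconv s y a a (hVy hsV).le (hPa y hyP).le le_rfl).trans hsr)
    · push Not at hy
      refine ⟨P, hP, subset_rfl, ?_, fun t ht _ => ht⟩
      refine (hconv.ediam_le_of_forall_exists_dist_le (B := {a}) ?_ fun t ht => ⟨a, rfl, hy t ht⟩
        ).trans_lt ((ENNReal.ofReal_lt_ofReal_iff hε).2 hr)
      exact Or.inl fun t ht _ hb => hb ▸ hPa t ht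
  choose U hU using fun n : ℕ => hcover (ε - 1 / (n + 1)) (sub_lt_self ε Nat.one_div_pos_of_nat)
  obtain ⟨𝒱, h𝒱⟩ := exists_isDPartition_iUnion hε (fun n => (hU n).1) fun n => (hU n).2.2.1
  refine ⟨𝒱, (?_ : ⋃ n, U n = P) ▸ h𝒱⟩
  refine Subset.antisymm (iUnion_subset fun n => (hU n).2.1) fun t ht => ?_
  obtain ⟨n, hn⟩ := exists_nat_one_div_lt (sub_pos.2 (hdist t ht))
  exact mem_iUnion.2 ⟨n, (hU n).2.2.2 t ht (by linarith)⟩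

theorem exists_isDPartition_of_forall_lt_of_dist_lt (hconv : IsConvexMetric X)
    (hbase : HasOrdConnectedBasis X) (hε : 0 < ε) (hP : IsClopen P) (hPa : ∀ t ∈ P, t < a)
    (hdist : ∀ t ∈ P, dist t a < ε) : ∃ 𝒱, IsDPartition ε P 𝒱 := by
  by_cases hleast : ∃ x ∈ P, P \ connectedComponent x ⊆ rightOf (connectedComponent x)
  · obtain ⟨x, hx, hright⟩ := hleast
    obtain ⟨Y, hY, hYc, hYP, z, hz, hPY⟩ :=
      exists_mem_DXeps_of_diff_subset_rightOf hconv hbase hε hP hx hright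
    obtain ⟨𝒲, h𝒲⟩ := exists_isDPartition_of_ediam_lt hε (hP.diff hYc)
      (hconv.ediam_lt_of_subset_Icc (fun t ht => ⟨hPY ht, (hPa t ht.1).le⟩) (hdist z hz))
    exact ⟨_, union_sdiff_cancel hYP ▸ (isDPartition_singleton hY).union h𝒲 disjoint_sdiff_right⟩
  · push Not at hleast
    refine exists_isDPartition_of_forall_exists_mem_leftOf hconv hbase hε hP hPa hdist
      fun x hx => ?_
    obtain ⟨t, ⟨htP, htK⟩, htr⟩ := not_subset.1 (hleast x hx)
    exact ⟨t, htP, (isPreconnected_connectedComponent.mem_leftOf_or_mem_rightOf htK).resolve_right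
      htr⟩

end Bottom

section LeftSide

variable {X : Type*} [MetricSpace X] [LinearOrder X] [OrderClosedTopology X] {ε : ℝ}
  {Z : Set X} {a : X}

theorem exists_isDPartition_succ (hconv : IsConvexMetric X) (hbase : HasOrdConnectedBasis X)
    (hε : 0 < ε) (hZ : IsClopen Z) (haZ : a ∈ Z) (ha : a ∈ closure (Iio a))
    (hsep : ∀ t ∈ Z, t < a → a ∉ connectedComponent t) (hdist : ∀ t ∈ Z, t < a → dist t a < ε)
    {W : Set X} {𝒱 : Set (Set X)} (hW : IsClopen W) (hWlow : IsLowerSet W) (hWa : W ⊆ Iio a)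
    (h𝒱 : IsDPartition ε (Z ∩ W) 𝒱) :
    ∃ W' 𝒱', IsClopen W' ∧ IsLowerSet W' ∧ W' ⊆ Iio a ∧ IsDPartition ε (Z ∩ W') 𝒱' ∧
      𝒱.encard + 1 ≤ 𝒱'.encard ∧ ∀ t ∈ Z, t < a → t ∉ W' → dist t a < ε / 2 := by
  obtain ⟨x, ⟨⟨hxZ, hxW⟩, hxa⟩, hxlt⟩ : ((Z \ W ∩ Metric.ball a (ε / 2)) ∩ Iio a).Nonempty :=
    mem_closure_iff.1 ha _ ((hZ.diff hW).isOpen.inter Metric.isOpen_ball)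
      ⟨⟨haZ, fun h => lt_irrefl a (hWa h)⟩, Metric.mem_ball_self (half_pos hε)⟩
  obtain ⟨V, hV, hVlow, hxV, hVa⟩ :=
    exists_isClopen_isLowerSet_of_notMem_connectedComponent hbase hxlt (hsep x hxZ hxlt)
  obtain ⟨𝒲, h𝒲⟩ := exists_isDPartition_of_forall_lt_of_dist_lt hconv hbase hε
    (hZ.inter (hV.diff hW)) (fun t ht => hVa ht.2.1) fun t ht => hdist t ht.1 (hVa ht.2.1)
  obtain ⟨w, hw, hxw⟩ := h𝒲.exists_mem ⟨hxZ, hxV, hxW⟩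
  have hw𝒱 : w ∉ 𝒱 := fun h => hxW (h𝒱.subset h hxw).2
  refine ⟨W ∪ V, 𝒱 ∪ 𝒲, hW.union hV, hWlow.union hVlow, union_subset hWa hVa, ?_, ?_, ?_⟩
  · rw [← union_sdiff_self, inter_union_distrib_left]
    exact h𝒱.union h𝒲 (disjoint_sdiff_right.mono inter_subset_right inter_subset_right)
  · calc 𝒱.encard + 1 = (insert w 𝒱).encard := (encard_insert_of_notMem hw𝒱).symm
      _ ≤ (𝒱 ∪ 𝒲).encard := encard_le_encard (insert_subset (Or.inr hw) subset_union_left)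
  · intro t _ hta htW'
    have hxt : x < t := lt_of_not_ge fun htx => htW' (Or.inr (hVlow htx hxV))
    exact (hconv x t a a hxt.le hta.le le_rfl).trans_lt (Metric.mem_ball.1 hxa)

theorem exists_isDPartition_six_le_encard (hconv : IsConvexMetric X)
    (hbase : HasOrdConnectedBasis X) (hε : 0 < ε) (hZ : IsClopen Z) (haZ : a ∈ Z)
    (ha : a ∈ closure (Iio a)) (hsep : ∀ t ∈ Z, t < a → a ∉ connectedComponent t)
    (hdist : ∀ t ∈ Z, t < a → dist t a < ε) :
    ∃ W 𝒱, IsClopen W ∧ W ⊆ Iio a ∧ IsDPartition ε (Z ∩ W) 𝒱 ∧ 6 ≤ 𝒱.encard ∧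
      ∀ t ∈ Z, t < a → t ∉ W → dist t a < ε / 2 := by
  have hiter : ∀ n : ℕ, ∃ W 𝒱, IsClopen W ∧ IsLowerSet W ∧ W ⊆ Iio a ∧
      IsDPartition ε (Z ∩ W) 𝒱 ∧ (n : ℕ∞) ≤ 𝒱.encard := by
    intro n
    induction n with
    | zero => exact ⟨∅, ∅, isClopen_empty, isLowerSet_empty, empty_subset _,
        (inter_empty Z).symm ▸ isDPartition_empty, by simp⟩
    | succ n ih =>
      obtain ⟨W, 𝒱, hW, hWlow, hWa, h𝒱, hn⟩ := ih
      obtain ⟨W', 𝒱', hW', hWlow', hWa', h𝒱', hcard, -⟩ :=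
        exists_isDPartition_succ hconv hbase hε hZ haZ ha hsep hdist hW hWlow hWa h𝒱
      exact ⟨W', 𝒱', hW', hWlow', hWa', h𝒱', by
        push_cast
        exact (add_le_add_left hn 1).trans hcard⟩
  obtain ⟨W, 𝒱, hW, hWlow, hWa, h𝒱, h5⟩ := hiter 5
  obtain ⟨W', 𝒱', hW', -, hWa', h𝒱', hcard, hnear⟩ :=
    exists_isDPartition_succ hconv hbase hε hZ haZ ha hsep hdist hW hWlow hWa h𝒱
  exact ⟨W', 𝒱', hW', hWa', h𝒱', le_trans (by norm_num) ((add_le_add_left h5 1).trans hcard),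
    hnear⟩

end LeftSide

theorem Set.encard_insert_union_ne_two {α : Type*} {a : α} {s t : Set α} (ha : a ∉ s ∪ t)
    (hs : s = ∅ ∨ 2 ≤ s.encard) (ht : t = ∅ ∨ 2 ≤ t.encard) : (insert a (s ∪ t)).encard ≠ 2 := by
  rw [encard_insert_of_notMem ha]
  rcases hs with rfl | hs
  · rcases ht with rfl | ht
    · simp
    · intro h
      have := (add_le_add_left (ht.trans (encard_le_encard subset_union_right)) 1).trans_eq h
      norm_num at this
  · intro h
    have := (add_le_add_left (hs.trans (encard_le_encard subset_union_left)) 1).trans_eq h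
    norm_num at this

section Assembly

variable {X : Type*} [MetricSpace X] [LinearOrder X] {ε : ℝ} {Z C W Wl Wr : Set X}
  {𝒱 𝒱l 𝒱r : Set (Set X)}

theorem subset_Delta_of_mem_DXeps [OrderClosedTopology X] (hconv : IsConvexMetric X) {δ : ℝ}
    (hδ : 0 < δ) (hZ : Z ∈ DXeps X δ) {x : X} (hx : x ∈ Z)
    (hdiam : ENNReal.ofReal δ ≤ Metric.ediam (connectedComponent x)) :
    Z ⊆ Delta (connectedComponent x) δ := by
  have hZc : IsClopen Z := hZ.1.1
  obtain hd | ⟨_, ⟨⟨y, hy, rfl⟩, -⟩, hsub⟩ := hZ.2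
  · exact absurd (hdiam.trans (Metric.ediam_mono (hZc.connectedComponent_subset hx))) hd.not_ge
  rw [hZc.connectedComponentIn_eq hy] at hsub
  obtain hxy | hxy := eq_or_ne (connectedComponent x) (connectedComponent y)
  · rwa [hxy]
  refine absurd (hdiam.trans ?_) ((ENNReal.ofReal_lt_ofReal_iff hδ).2 (half_lt_self hδ)).not_ge
  refine hconv.ediam_le_of_forall_exists_dist_le
    (isPreconnected_connectedComponent.setBelow_or_setBelow isPreconnected_connectedComponent
      (connectedComponent_disjoint hxy)) fun t ht => ?_
  obtain ⟨c, hc, htc⟩ := Delta_subset_ballAround hδ (hsub (hZc.connectedComponent_subset hx ht))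
  exact ⟨c, hc, htc.le⟩

/-- The part of the partition left of `C`. The points of `Z` left of `C` but outside `W` go into
the middle piece `Z \ (Wl ∪ Wr)`, which is why they must lie in `Δ(C, ε)`. -/
structure IsLeftSide (ε : ℝ) (Z C W : Set X) (𝒱 : Set (Set X)) : Prop where
  isClopen : IsClopen W
  setBelow : setBelow W C
  isDPartition : IsDPartition ε (Z ∩ W) 𝒱
  diff_subset_Delta : (Z ∩ leftOf C) \ W ⊆ Delta C ε
  six_mul_ell_le : 6 * (ell C : ℕ∞) ≤ 𝒱.encard
  eq_empty_or_six_le : 𝒱 = ∅ ∨ 6 ≤ 𝒱.encard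

structure IsRightSide (ε : ℝ) (Z C W : Set X) (𝒱 : Set (Set X)) : Prop where
  isClopen : IsClopen W
  setBelow : setBelow C W
  isDPartition : IsDPartition ε (Z ∩ W) 𝒱
  diff_subset_Delta : (Z ∩ rightOf C) \ W ⊆ Delta C ε
  six_mul_rr_le : 6 * (rr C : ℕ∞) ≤ 𝒱.encard
  eq_empty_or_six_le : 𝒱 = ∅ ∨ 6 ≤ 𝒱.encard

theorem IsLeftSide.ofDual (h : IsLeftSide (X := Xᵒᵈ) ε Z C W 𝒱) : IsRightSide ε Z C W 𝒱 where
  isClopen := h.isClopen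
  setBelow := fun c hc w hw => h.setBelow w hw c hc
  isDPartition := IsDPartition.ofDual (X := X) h.isDPartition
  diff_subset_Delta := Delta_dual C ε ▸ h.diff_subset_Delta
  six_mul_rr_le := ell_dual C ▸ h.six_mul_ell_le
  eq_empty_or_six_le := h.eq_empty_or_six_le

theorem IsLeftSide.setBelow_of_mem (h : IsLeftSide ε Z C W 𝒱) {u : Set X} (hu : u ∈ 𝒱) :
    _root_.setBelow u C := fun t ht => h.setBelow t (h.isDPartition.subset hu ht).2

theorem IsRightSide.setBelow_of_mem (h : IsRightSide ε Z C W 𝒱) {u : Set X} (hu : u ∈ 𝒱) :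
    _root_.setBelow C u := fun c hc t ht => h.setBelow c hc t (h.isDPartition.subset hu ht).2

theorem IsLeftSide.ediam_le (hconv : IsConvexMetric X) (h : IsLeftSide ε Z C W 𝒱)
    (hZC : Z ⊆ ballAround C ε) {u : Set X} (hu : u ∈ 𝒱) : Metric.ediam u ≤ ENNReal.ofReal ε :=
  hconv.ediam_le_of_forall_exists_dist_le (Or.inl (h.setBelow_of_mem hu)) fun _ ht =>
    let ⟨c, hc, htc⟩ := hZC (h.isDPartition.subset hu ht).1
    ⟨c, hc, htc.le⟩

theorem IsRightSide.ediam_le (hconv : IsConvexMetric X) (h : IsRightSide ε Z C W 𝒱)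
    (hZC : Z ⊆ ballAround C ε) {u : Set X} (hu : u ∈ 𝒱) : Metric.ediam u ≤ ENNReal.ofReal ε :=
  hconv.ediam_le_of_forall_exists_dist_le (Or.inr (h.setBelow_of_mem hu)) fun _ ht =>
    let ⟨c, hc, htc⟩ := hZC (h.isDPartition.subset hu ht).1
    ⟨c, hc, htc.le⟩

theorem IsLeftSide.subset_diff_union (hl : IsLeftSide ε Z C Wl 𝒱l)
    (hr : IsRightSide ε Z C Wr 𝒱r) (hCZ : C ⊆ Z) : C ⊆ Z \ (Wl ∪ Wr) := fun c hc =>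
  ⟨hCZ hc, by
    rintro (h | h)
    exacts [lt_irrefl c (hl.setBelow c h c hc), lt_irrefl c (hr.setBelow c hc c h)]⟩

theorem IsLeftSide.diff_union_notMem (hl : IsLeftSide ε Z C Wl 𝒱l)
    (hr : IsRightSide ε Z C Wr 𝒱r) (hCZ : C ⊆ Z) (hC : C.Nonempty) :
    Z \ (Wl ∪ Wr) ∉ 𝒱l ∪ 𝒱r := by
  obtain ⟨c, hc⟩ := hC
  have hcV := hl.subset_diff_union hr hCZ hc
  rintro (h | h)
  exacts [lt_irrefl c (hl.setBelow_of_mem h c hcV c hc),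
    lt_irrefl c (hr.setBelow_of_mem h c hc c hcV)]

theorem IsLeftSide.mem_or_mem_of_inter_eq_empty (hl : IsLeftSide ε Z C Wl 𝒱l)
    (hr : IsRightSide ε Z C Wr 𝒱r) (hCZ : C ⊆ Z) (hC : C.Nonempty) {u : Set X}
    (hu : u ∈ insert (Z \ (Wl ∪ Wr)) (𝒱l ∪ 𝒱r)) (huC : u ∩ C = ∅) : u ∈ 𝒱l ∨ u ∈ 𝒱r := by
  obtain ⟨c, hc⟩ := hC
  rcases hu with rfl | hu
  · exact absurd (huC ▸ ⟨hl.subset_diff_union hr hCZ hc, hc⟩ : c ∈ (∅ : Set X)) (notMem_empty c)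
  · exact hu

theorem IsLeftSide.isDPartition_insert (hl : IsLeftSide ε Z C Wl 𝒱l)
    (hr : IsRightSide ε Z C Wr 𝒱r) (hC : C.Nonempty) (hV : Z \ (Wl ∪ Wr) ∈ DXeps X ε) :
    IsDPartition ε Z (insert (Z \ (Wl ∪ Wr)) (𝒱l ∪ 𝒱r)) := by
  obtain ⟨c, hc⟩ := hC
  have hlr : Disjoint (Z ∩ Wl) (Z ∩ Wr) := disjoint_left.2 fun t htl htr =>
    lt_asymm (hl.setBelow t htl.2 c hc) (hr.setBelow c hc t htr.2)
  rw [insert_eq]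
  convert (isDPartition_singleton hV).union (hl.isDPartition.union hr.isDPartition hlr)
    (disjoint_sdiff_left.mono_right (union_subset_union inter_subset_right inter_subset_right))
    using 1
  rw [← inter_union_distrib_left, sdiff_union_inter]

variable [OrderClosedTopology X]

theorem exists_isLeftSide (hconv : IsConvexMetric X) (hbase : HasOrdConnectedBasis X)
    (hε : 0 < ε) (hZ : IsClopen Z) {x₀ : X} (hx₀ : x₀ ∈ Z)
    (hZΔ : Z ⊆ Delta (connectedComponent x₀) (2 * ε)) :
    ∃ W 𝒱, IsLeftSide ε Z (connectedComponent x₀) W 𝒱 := by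
  set C := connectedComponent x₀
  by_cases hℓ : ell C = 0
  · refine ⟨∅, ∅, isClopen_empty, fun _ h => h.elim, (inter_empty Z).symm ▸ isDPartition_empty,
      ?_, by simp [hℓ], Or.inl rfl⟩
    rintro t ⟨⟨htZ, htl⟩, -⟩
    exact ((disjoint_Delta_leftOf hℓ).notMem_of_mem_left (hZΔ htZ) htl).elim
  obtain ⟨a, hacl, haC⟩ := ell_ne_zero_iff.1 hℓ
  have hleft : leftOf C = Iio a := leftOf_eq_Iio ⟨hacl, haC⟩
  have hCa : C = connectedComponent a := connectedComponent_eq haC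
  have hZC : Z ⊆ ballAround C ε := fun t ht => by
    simpa using Delta_subset_ballAround (by positivity) (hZΔ ht)
  obtain ⟨W, 𝒱, hW, hWa, h𝒱, h6, hnear⟩ := exists_isDPartition_six_le_encard hconv hbase hε hZ
    (hZ.connectedComponent_subset hx₀ haC) (hleft ▸ hacl)
    (fun t _ hta hat => hta.not_ge (le_of_mem_closure_leftOf hacl (by
      rw [hCa, ← connectedComponent_eq hat]; exact mem_connectedComponent)))
    fun t ht hta => by
      obtain ⟨c, hc, htc⟩ := hZC ht
      exact (hconv t t a c le_rfl hta.le (le_of_mem_closure_leftOf hacl hc)).trans_lt htc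
  refine ⟨W, 𝒱, hW, fun w hw c hc => (hWa hw).trans_le (le_of_mem_closure_leftOf hacl hc), h𝒱,
    fun t ⟨⟨htZ, htl⟩, htW⟩ => mem_Delta_of_mem_leftOf hℓ htl ⟨a, haC, hnear t htZ (htl a haC) htW⟩,
    ?_, Or.inr h6⟩
  calc 6 * (ell C : ℕ∞) ≤ 6 * 1 := by gcongr; exact_mod_cast ell_le_one C
    _ ≤ 𝒱.encard := by simpa using h6

theorem exists_isRightSide (hconv : IsConvexMetric X) (hbase : HasOrdConnectedBasis X)
    (hε : 0 < ε) (hZ : IsClopen Z) {x₀ : X} (hx₀ : x₀ ∈ Z)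
    (hZΔ : Z ⊆ Delta (connectedComponent x₀) (2 * ε)) :
    ∃ W 𝒱, IsRightSide ε Z (connectedComponent x₀) W 𝒱 :=
  let ⟨W, 𝒱, h⟩ := exists_isLeftSide (X := Xᵒᵈ) hconv.dual hbase.dual hε hZ hx₀
    ((Delta_dual (connectedComponent x₀) (2 * ε)).symm ▸ hZΔ)
  ⟨W, 𝒱, h.ofDual⟩

theorem diff_union_mem_DXeps (hε : 0 < ε) (hZ : IsClopen Z) {x₀ : X} (hx₀ : x₀ ∈ Z)
    (hZΔ : Z ⊆ Delta (connectedComponent x₀) (2 * ε))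
    (hdiam : ENNReal.ofReal ε ≤ Metric.ediam (connectedComponent x₀))
    (hl : IsLeftSide ε Z (connectedComponent x₀) Wl 𝒱l)
    (hr : IsRightSide ε Z (connectedComponent x₀) Wr 𝒱r) : Z \ (Wl ∪ Wr) ∈ DXeps X ε := by
  set C := connectedComponent x₀
  have hCV := hl.subset_diff_union hr (hZ.connectedComponent_subset hx₀)
  have hx₀V := hCV mem_connectedComponent
  have hV := hZ.diff (hl.isClopen.union hr.isClopen)
  refine ⟨⟨hV, or_iff_not_imp_right.2 fun hfin => ⟨x₀, ?_⟩⟩,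
    Or.inr ⟨C, ⟨⟨x₀, hx₀V, (hV.connectedComponentIn_eq hx₀V).symm⟩, hdiam⟩, fun t ht => ?_⟩⟩
  · have hCo : IsOpen C := isOpen_connectedComponent_of_finite hV (not_infinite.1 hfin) hx₀V
    have hC : ell C = 0 ∧ rr C = 0 :=
      ⟨ell_eq_zero_of_isOpen hCo subset_rfl (disjoint_left.2 fun c hc h => lt_irrefl c (h c hc)),
        rr_eq_zero_of_isOpen hCo subset_rfl (disjoint_left.2 fun c hc h => lt_irrefl c (h c hc))⟩
    exact Subset.antisymm (sdiff_subset.trans (hZΔ.trans (Delta_eq_self hC).subset)) hCV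
  · by_cases htC : t ∈ C
    · exact subset_Delta_self hε htC
    rcases isPreconnected_connectedComponent.mem_leftOf_or_mem_rightOf htC with htl | htr
    · exact hl.diff_subset_Delta ⟨⟨ht.1, htl⟩, fun h => ht.2 (Or.inl h)⟩
    · exact hr.diff_subset_Delta ⟨⟨ht.1, htr⟩, fun h => ht.2 (Or.inr h)⟩

end Assembly

theorem stmt15_general {X : Type*} [MetricSpace X] [LinearOrder X]
    (hconv : ∀ x a b y : X, x ≤ a → a ≤ b → b ≤ y → dist a b ≤ dist x y)
    (hIio : ∀ a : X, IsOpen (Set.Iio a)) (hIoi : ∀ a : X, IsOpen (Set.Ioi a))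
    (hbase : ∀ (x : X) (U : Set X), IsOpen U → x ∈ U →
      ∃ V : Set X, IsOpen V ∧ x ∈ V ∧ V ⊆ U ∧ V.OrdConnected)
    (ε : ℝ) (hε : 0 < ε) (Z : Set X) (hZ : Z ∈ DXeps X (2 * ε))
    (C : Set X) (x₀ : X) (hx₀ : x₀ ∈ Z) (hC : C = connectedComponentIn Z x₀)
    (hdiam : ENNReal.ofReal (2 * ε) ≤ EMetric.diam C) :
    ∃ 𝒰 : Set (Set X),
      (∀ u ∈ 𝒰, u ∈ DXeps X ε) ∧ ⋃₀ 𝒰 = Z ∧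
      (∀ u ∈ 𝒰, ∀ v ∈ 𝒰, u ≠ v → u ∩ v = ∅) ∧
      (∀ x : X, ∃ N ∈ nhds x, {u | u ∈ 𝒰 ∧ (u ∩ N).Nonempty}.Subsingleton) ∧
      𝒰.encard ≠ 2 ∧
      (∀ u ∈ 𝒰, u ∩ C = ∅ → setBelow u C ∨ setBelow C u) ∧
      (6 * (ell C : ℕ∞) ≤ {u | u ∈ 𝒰 ∧ setBelow u C}.encard) ∧
      (6 * (rr C : ℕ∞) ≤ {u | u ∈ 𝒰 ∧ setBelow C u}.encard) ∧
      (∀ u ∈ 𝒰, u ∩ C = ∅ → EMetric.diam u ≤ ENNReal.ofReal (2 * ε)) := by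
  have := orderClosedTopology_of_isOpen_Iio_Ioi hIio hIoi
  have hZc : IsClopen Z := hZ.1.1
  rw [hZc.connectedComponentIn_eq hx₀] at hC
  subst hC
  have hCZ := hZc.connectedComponent_subset hx₀
  have hC : (connectedComponent x₀).Nonempty := ⟨x₀, mem_connectedComponent⟩
  have hZΔ := subset_Delta_of_mem_DXeps hconv (by positivity) hZ hx₀ hdiam
  have hZC : Z ⊆ ballAround (connectedComponent x₀) ε := fun t ht => by
    simpa using Delta_subset_ballAround (by positivity) (hZΔ ht)
  obtain ⟨Wl, 𝒱l, hl⟩ := exists_isLeftSide hconv hbase hε hZc hx₀ hZΔ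
  obtain ⟨Wr, 𝒱r, hr⟩ := exists_isRightSide hconv hbase hε hZc hx₀ hZΔ
  have h2ε : ENNReal.ofReal ε ≤ ENNReal.ofReal (2 * ε) := ENNReal.ofReal_le_ofReal (by linarith)
  have h𝒰 := hl.isDPartition_insert hr hC
    (diff_union_mem_DXeps hε hZc hx₀ hZΔ (h2ε.trans hdiam) hl hr)
  refine ⟨_, h𝒰.subset_DXeps, h𝒰.sUnion_eq, fun u hu v hv huv =>
    disjoint_iff_inter_eq_empty.1 (h𝒰.pairwiseDisjoint hu hv huv),
    h𝒰.exists_mem_nhds_subsingleton hZc.isClosed,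
    encard_insert_union_ne_two (hl.diff_union_notMem hr hCZ hC)
      (hl.eq_empty_or_six_le.imp_right (le_trans (by norm_num)))
      (hr.eq_empty_or_six_le.imp_right (le_trans (by norm_num))),
    fun u hu huC => (hl.mem_or_mem_of_inter_eq_empty hr hCZ hC hu huC).imp
      hl.setBelow_of_mem hr.setBelow_of_mem,
    hl.six_mul_ell_le.trans (encard_le_encard fun u hu =>
      ⟨Or.inr (Or.inl hu), hl.setBelow_of_mem hu⟩),
    hr.six_mul_rr_le.trans (encard_le_encard fun u hu =>
      ⟨Or.inr (Or.inr hu), hr.setBelow_of_mem hu⟩), fun u hu huC => ?_⟩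
  rcases hl.mem_or_mem_of_inter_eq_empty hr hCZ hC hu huC with hu | hu
  exacts [(hl.ediam_le hconv hZC hu).trans h2ε, (hr.ediam_le hconv hZC hu).trans h2ε]

/-- Lemma 4.5: in a metrizable suborderable space `(X, ≤)` with compatible
convex metric and infinitely many connected components, let `ε > 0`,
`Z ∈ D[X, 2ε]` and let `C` be a connected component of `Z` with
`diam C ≥ 2ε`. Then `Z` has a partition `𝒰 ⊆ D[X, ε]`, discrete in `X`, with
`|𝒰| ≠ 2`, such that (i) every `U ∈ 𝒰` disjoint from `C` satisfies `U < C` or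
`C < U`; (ii) at least `6ℓ(C)` members of `𝒰` lie below `C` and at least
`6r(C)` members lie above `C`; and every `U ∈ 𝒰` disjoint from `C` has
diameter at most `2ε`. -/
theorem stmt15 {X : Type*} [MetricSpace X] [LinearOrder X]
    (hconv : ∀ x a b y : X, x ≤ a → a ≤ b → b ≤ y → dist a b ≤ dist x y)
    (hIio : ∀ a : X, IsOpen (Set.Iio a)) (hIoi : ∀ a : X, IsOpen (Set.Ioi a))
    (hbase : ∀ (x : X) (U : Set X), IsOpen U → x ∈ U →
      ∃ V : Set X, IsOpen V ∧ x ∈ V ∧ V ⊆ U ∧ V.OrdConnected)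
    (hinf : (Set.range fun x : X => connectedComponent x).Infinite)
    (ε : ℝ) (hε : 0 < ε) (Z : Set X) (hZ : Z ∈ DXeps X (2 * ε))
    (C : Set X) (x₀ : X) (hx₀ : x₀ ∈ Z) (hC : C = connectedComponentIn Z x₀)
    (hdiam : ENNReal.ofReal (2 * ε) ≤ EMetric.diam C) :
    ∃ 𝒰 : Set (Set X),
      (∀ u ∈ 𝒰, u ∈ DXeps X ε) ∧ ⋃₀ 𝒰 = Z ∧
      (∀ u ∈ 𝒰, ∀ v ∈ 𝒰, u ≠ v → u ∩ v = ∅) ∧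
      (∀ x : X, ∃ N ∈ nhds x, {u | u ∈ 𝒰 ∧ (u ∩ N).Nonempty}.Subsingleton) ∧
      𝒰.encard ≠ 2 ∧
      (∀ u ∈ 𝒰, u ∩ C = ∅ → setBelow u C ∨ setBelow C u) ∧
      (6 * (ell C : ℕ∞) ≤ {u | u ∈ 𝒰 ∧ setBelow u C}.encard) ∧
      (6 * (rr C : ℕ∞) ≤ {u | u ∈ 𝒰 ∧ setBelow C u}.encard) ∧
      (∀ u ∈ 𝒰, u ∩ C = ∅ → EMetric.diam u ≤ ENNReal.ofReal (2 * ε)) :=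
  stmt15_general hconv hIio hIoi hbase ε hε Z hZ C x₀ hx₀ hC hdiam
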